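/- arXiv:2306.14394 — 6 statements merged into one kernel-verified Lean document; each statement's English description precedes it below -/
import Mathlib

section
/- Lower bound for nonzero proximal points: let λ > 0, q ∈ (0,1), a ∈ ℝ, and suppose z* ≠ 0 is a global minimizer of φ(z) = (1/2)(z-a)² + λ|z|^q. Then |z*| ≥ (2λ(1-q))^{1/(2-q)}. -/
open Real

lemma pos_case (lam q a s : ℝ) (hlam : 0 < lam) (hq0 : 0 < q) (hq1 : q < 1)
    (hs : 0 < s)
    (hmin : ∀ z : ℝ, (1 / 2) * (s - a) ^ 2 + lam * |s| ^ q ≤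
      (1 / 2) * (z - a) ^ 2 + lam * |z| ^ q) :
    2 * lam * (1 - q) ≤ s ^ ((2 : ℝ) - q) := by
  have hsq : (0 : ℝ) < s ^ q := Real.rpow_pos_of_pos hs q
  have habs : |s| = s := abs_of_pos hs
  -- step 1 : compare with 0
  have h0 := hmin 0
  rw [habs, abs_zero, Real.zero_rpow (ne_of_gt hq0)] at h0
  have h1 : lam * s ^ q ≤ a * s - s ^ 2 / 2 := by nlinarith [h0]
  -- step 2 : compare with (1+ε) * s
  have h2 : s * (a - s) ≤ lam * q * s ^ q := by
    apply le_of_forall_pos_le_add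
    intro ε hε
    set e : ℝ := 2 * ε / s ^ 2 with he
    have he0 : 0 < e := by positivity
    have hz := hmin ((1 + e) * s)
    have habs2 : |(1 + e) * s| = (1 + e) * s := by
      apply abs_of_pos; positivity
    rw [habs, habs2] at hz
    have hbern : ((1 + e) * s) ^ q ≤ (1 + q * e) * s ^ q := by
      rw [Real.mul_rpow (by linarith) hs.le]
      have := rpow_one_add_le_one_add_mul_self (s := e) (by linarith) hq0.le hq1.le
      nlinarith [hsq, Real.rpow_nonneg (show (0:ℝ) ≤ 1 + e by linarith) q]
    have hz2 : (1 / 2) * (s - a) ^ 2 + lam * s ^ q ≤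
        (1 / 2) * ((1 + e) * s - a) ^ 2 + lam * ((1 + q * e) * s ^ q) := by
      calc (1 / 2) * (s - a) ^ 2 + lam * s ^ q ≤
          (1 / 2) * ((1 + e) * s - a) ^ 2 + lam * ((1 + e) * s) ^ q := hz
        _ ≤ _ := by gcongr
    -- divide by e
    have key : 0 ≤ s ^ 2 + e * s ^ 2 / 2 - a * s + lam * q * s ^ q := by
      nlinarith [hz2, he0]
    have : e * s ^ 2 / 2 = ε := by
      rw [he]; field_simp
    nlinarith [key, this]
  -- step 3 : combine
  have h3 : lam * (1 - q) * s ^ q ≤ s ^ 2 / 2 := by nlinarith [h1, h2]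
  have h4 : 2 * lam * (1 - q) ≤ s ^ 2 / s ^ q := by
    rw [le_div_iff₀ hsq]; nlinarith [h3]
  have h5 : s ^ ((2 : ℝ) - q) = s ^ 2 / s ^ q := by
    rw [Real.rpow_sub hs]
    norm_num [Real.rpow_two]
  linarith [h4, h5.ge, h5.le]

theorem stmt_5 (lam q a zs : ℝ) (hlam : 0 < lam) (hq0 : 0 < q) (hq1 : q < 1)
    (hzs : zs ≠ 0)
    (hmin : ∀ z : ℝ, (1 / 2) * (zs - a) ^ 2 + lam * |zs| ^ q ≤
      (1 / 2) * (z - a) ^ 2 + lam * |z| ^ q) :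
    (2 * lam * (1 - q)) ^ ((1 : ℝ) / (2 - q)) ≤ |zs| := by
  have hs : 0 < |zs| := abs_pos.mpr hzs
  have key : 2 * lam * (1 - q) ≤ |zs| ^ ((2 : ℝ) - q) := by
    rcases lt_or_gt_of_ne hzs with hneg | hpos
    · have habs : |zs| = -zs := abs_of_neg hneg
      rw [habs]
      apply pos_case lam q (-a) (-zs) hlam hq0 hq1 (by linarith)
      intro z
      have := hmin (-z)
      have e1 : (-zs - -a) ^ 2 = (zs - a) ^ 2 := by ring
      have e2 : (-z - a) ^ 2 = (z - -a) ^ 2 := by ring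
      rw [abs_neg] at this
      rw [e1, abs_neg]
      calc (1 / 2) * (zs - a) ^ 2 + lam * |zs| ^ q ≤
          (1 / 2) * (-z - a) ^ 2 + lam * |z| ^ q := this
        _ = (1 / 2) * (z - -a) ^ 2 + lam * |z| ^ q := by rw [e2]
    · have habs : |zs| = zs := abs_of_pos hpos
      rw [habs]
      exact pos_case lam q a zs hlam hq0 hq1 hpos hmin
  have h2q : (0 : ℝ) < 2 - q := by linarith
  have hbase : (0 : ℝ) ≤ 2 * lam * (1 - q) := by nlinarith
  calc (2 * lam * (1 - q)) ^ ((1 : ℝ) / (2 - q))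
      ≤ (|zs| ^ ((2 : ℝ) - q)) ^ ((1 : ℝ) / (2 - q)) := by
        apply Real.rpow_le_rpow hbase key (by positivity)
    _ = |zs| := by
        rw [← Real.rpow_mul hs.le, mul_one_div_cancel (ne_of_gt h2q), Real.rpow_one]
end

section
/- Second-order lower bound at nonzero proximal points: let λ > 0, q ∈ (0,1), a ∈ ℝ, and suppose z* ≠ 0 globally minimizes φ(z) = (1/2)(z-a)² + λ|z|^q. Then the second derivative of φ at |z*| (with respect to the positive-branch formula) satisfies φ''(|z*|) = 1 - λq(1-q)|z*|^{q-2} ≥ 1 - q/2 > 1/2. -/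
theorem stmt_6 (lam q a zs : ℝ) (hlam : 0 < lam) (hq0 : 0 < q) (hq1 : q < 1)
    (hzs : zs ≠ 0)
    (hmin : ∀ z : ℝ, (1 / 2) * (zs - a) ^ 2 + lam * |zs| ^ q ≤
      (1 / 2) * (z - a) ^ 2 + lam * |z| ^ q) :
    1 - q / 2 ≤ 1 - lam * q * (1 - q) * |zs| ^ (q - 2) ∧ (1 : ℝ) / 2 < 1 - q / 2 := by
  have hr : 0 < |zs| := abs_pos.mpr hzs
  set p : ℝ := |zs| ^ q with hp_def
  have hp : 0 < p := Real.rpow_pos_of_pos hr q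
  have hz2 : 0 < zs ^ 2 := by positivity
  -- compare with z = 0
  have h0 : (1 / 2) * (zs - a) ^ 2 + lam * p ≤ (1 / 2) * a ^ 2 := by
    have := hmin 0
    simpa [Real.zero_rpow hq0.ne'] using this
  -- key inequality for all t > 1
  have key : ∀ t : ℝ, 1 < t → 2 * lam * (1 - q) * p ≤ zs ^ 2 * t := by
    intro t ht
    have ht0 : 0 < t := lt_trans one_pos ht
    have hA : (1 / 2) * (zs - a) ^ 2 + lam * p ≤
        (1 / 2) * (t * zs - a) ^ 2 + lam * (t ^ q * p) := by
      have := hmin (t * zs)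
      have habs : |t * zs| = t * |zs| := by
        rw [abs_mul, abs_of_pos ht0]
      rw [habs, Real.mul_rpow ht0.le hr.le] at this
      exact this
    -- Bernoulli: t^q ≤ 1 + q*(t-1)
    have hB : t ^ q ≤ 1 + q * (t - 1) := by
      have hs : (-1 : ℝ) ≤ t - 1 := by linarith
      have := rpow_one_add_le_one_add_mul_self hs hq0.le hq1.le
      simpa using this
    have hint1 : 0 ≤ (a * zs - zs ^ 2 / 2 - lam * p) * (t - 1) := by
      apply mul_nonneg _ (by linarith)
      nlinarith [h0]
    have hint2 : 0 ≤ lam * p * (1 + q * (t - 1) - t ^ q) := by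
      apply mul_nonneg (by positivity) (by linarith)
    have key2 : 2 * lam * (1 - q) * p * (t - 1) ≤ zs ^ 2 * t * (t - 1) := by
      nlinarith [hA, hint1, hint2]
    have htm : 0 < t - 1 := by linarith
    exact le_of_mul_le_mul_right key2 htm
  -- take t → 1⁺
  have hfin : 2 * lam * (1 - q) * p ≤ zs ^ 2 := by
    by_contra hlt
    push_neg at hlt
    set c : ℝ := 2 * lam * (1 - q) * p with hc_def
    set b : ℝ := zs ^ 2 with hb_def
    have hb : 0 < b := hz2
    have ht1 : 1 < (b + c) / (2 * b) := by
      rw [lt_div_iff₀ (by positivity)]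
      linarith
    have := key ((b + c) / (2 * b)) ht1
    have hbc : b * ((b + c) / (2 * b)) = (b + c) / 2 := by
      field_simp
    rw [hbc] at this
    linarith
  have hrw : |zs| ^ (q - 2) = p / zs ^ 2 := by
    rw [hp_def, Real.rpow_sub hr, Real.rpow_two, sq_abs]
  constructor
  · rw [hrw]
    have heq : lam * q * (1 - q) * (p / zs ^ 2) = lam * q * (1 - q) * p / zs ^ 2 := by
      ring
    have hle : lam * q * (1 - q) * p / zs ^ 2 ≤ q / 2 := by
      rw [div_le_iff₀ hz2]
      nlinarith [mul_nonneg hq0.le (by linarith : (0:ℝ) ≤ zs ^ 2 - 2 * lam * (1 - q) * p)]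
    rw [heq]
    linarith
  · linarith
end

section
/- Exclusion of the zero point as a P-stationary point: let f : ℝⁿ → ℝ be continuously differentiable with ∇f(0) ≠ 0, let α > 0, q ∈ [0,1), and suppose 0 < λ < (α^{1-q}/2)·‖∇f(0)‖_∞^{2-q}. Then 0 is not a minimizer of x ↦ ‖x + α∇f(0)‖² + 2αλ‖x‖_q^q. -/
open scoped BigOperators

/-- `‖x‖_q^q = ∑ᵢ |xᵢ|^q` with the convention `|0|^0 = 0`. -/
noncomputable def normQq {n : ℕ} (q : ℝ) (x : EuclideanSpace ℝ (Fin n)) : ℝ :=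
  ∑ i, if x i = 0 then 0 else |x i| ^ q

lemma euc_norm_sq {n : ℕ} (y : EuclideanSpace ℝ (Fin n)) : ‖y‖ ^ 2 = ∑ i, (y i) ^ 2 := by
  rw [EuclideanSpace.norm_eq, Real.sq_sqrt (by positivity)]
  simp [sq_abs]

theorem stmt_8 {n : ℕ} (f : EuclideanSpace ℝ (Fin n) → ℝ) (hf : ContDiff ℝ 1 f)
    (hgrad : gradient f 0 ≠ 0) (lam alpha q : ℝ) (halpha : 0 < alpha)
    (hq0 : 0 ≤ q) (hq1 : q < 1) (hlam0 : 0 < lam)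
    (hlam : lam < alpha ^ ((1 : ℝ) - q) / 2 * (⨆ i, |gradient f 0 i|) ^ ((2 : ℝ) - q)) :
    ¬ (∀ x : EuclideanSpace ℝ (Fin n),
        ‖(0 : EuclideanSpace ℝ (Fin n)) + alpha • gradient f 0‖ ^ 2 +
          2 * alpha * lam * normQq q (0 : EuclideanSpace ℝ (Fin n)) ≤
        ‖x + alpha • gradient f 0‖ ^ 2 + 2 * alpha * lam * normQq q x) := by
  intro h
  set g := gradient f 0 with hg
  have hn : n ≠ 0 := by
    rintro rfl
    exact hgrad (Subsingleton.elim _ _)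
  haveI : Nonempty (Fin n) := ⟨⟨0, Nat.pos_of_ne_zero hn⟩⟩
  set M := ⨆ i, |g i| with hM
  obtain ⟨i₀, hi₀⟩ := Finite.exists_max (fun i => |g i|)
  have hMi : M = |g i₀| :=
    le_antisymm (ciSup_le hi₀) (le_ciSup (f := fun i => |g i|) (Finite.bddAbove_range _) i₀)
  obtain ⟨j, hj⟩ : ∃ j, g j ≠ 0 := by
    by_contra hc
    push_neg at hc
    exact hgrad (by ext j; exact hc j)
  have hM0 : 0 < M := lt_of_lt_of_le (abs_pos.mpr hj) (hMi ▸ hi₀ j)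
  have hgi₀ : g i₀ ≠ 0 := by
    intro h0
    rw [hMi, h0, abs_zero] at hM0
    exact lt_irrefl _ hM0
  set x : EuclideanSpace ℝ (Fin n) := EuclideanSpace.single i₀ (-(alpha * g i₀)) with hx
  have hxi : ∀ i, x i = if i = i₀ then -(alpha * g i₀) else 0 := by
    intro i; simp [hx, EuclideanSpace.single_apply]
  have hxi₀ : x i₀ = -(alpha * g i₀) := by simp [hxi]
  have hxne : x i₀ ≠ 0 := by
    rw [hxi₀]
    simp [halpha.ne', hgi₀]
  -- norm computations
  have h0norm : ‖(0 : EuclideanSpace ℝ (Fin n)) + alpha • g‖ ^ 2 = ∑ i, (alpha * g i) ^ 2 := by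
    rw [euc_norm_sq]
    congr 1; ext i; simp
  have hxnorm : ‖x + alpha • g‖ ^ 2 = ∑ i, (if i = i₀ then 0 else (alpha * g i) ^ 2) := by
    rw [euc_norm_sq]
    congr 1; ext i
    by_cases hii : i = i₀
    · subst hii
      simp [hxi, PiLp.add_apply, PiLp.smul_apply]
    · simp [hii, hxi, PiLp.add_apply, PiLp.smul_apply]
  have hsum : ∑ i, (alpha * g i) ^ 2
      = (∑ i, (if i = i₀ then 0 else (alpha * g i) ^ 2)) + (alpha * g i₀) ^ 2 := by
    have hpt : ∀ i, (alpha * g i) ^ 2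
        = (if i = i₀ then 0 else (alpha * g i) ^ 2)
          + (if i = i₀ then (alpha * g i₀) ^ 2 else 0) := by
      intro i
      by_cases hii : i = i₀
      · subst hii; simp
      · simp [hii]
    rw [Finset.sum_congr rfl fun i _ => hpt i, Finset.sum_add_distrib,
      Finset.sum_ite_eq' Finset.univ i₀ fun _ => (alpha * g i₀) ^ 2]
    simp
  have hnq0 : normQq q (0 : EuclideanSpace ℝ (Fin n)) = 0 := by
    simp [normQq]
  have hnqx : normQq q x = (alpha * M) ^ q := by
    rw [normQq, Finset.sum_eq_single i₀]
    · rw [if_neg hxne, hxi₀, abs_neg, abs_mul, abs_of_pos halpha, ← hMi]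
    · intro i _ hi
      rw [hxi, if_neg hi]
      simp
    · simp
  have hkey := h x
  rw [h0norm, hxnorm, hnq0, hnqx, hsum, mul_zero, add_zero] at hkey
  have hle : (alpha * g i₀) ^ 2 ≤ 2 * alpha * lam * (alpha * M) ^ q := by linarith
  -- strict inequality the other way
  have hMq : (alpha * M) ^ q = alpha ^ q * M ^ q := Real.mul_rpow halpha.le hM0.le
  have hlt : 2 * alpha * lam * (alpha * M) ^ q < (alpha * g i₀) ^ 2 := by
    have h1 : (alpha * g i₀) ^ 2 = alpha ^ 2 * M ^ 2 := by
      rw [hMi, mul_pow, ← sq_abs (g i₀)]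
    have ha : alpha ^ ((1:ℝ) - q) * alpha ^ q = alpha := by
      rw [← Real.rpow_add halpha]; norm_num
    have hm : M ^ ((2:ℝ) - q) * M ^ q = M ^ 2 := by
      rw [← Real.rpow_add hM0]
      norm_num
    have hpos : 0 < (alpha * M) ^ q := Real.rpow_pos_of_pos (by positivity) q
    calc 2 * alpha * lam * (alpha * M) ^ q
        < 2 * alpha * (alpha ^ ((1:ℝ) - q) / 2 * M ^ ((2:ℝ) - q)) * (alpha * M) ^ q := by
          apply mul_lt_mul_of_pos_right _ hpos
          exact mul_lt_mul_of_pos_left hlam (by positivity)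
      _ = alpha ^ 2 * M ^ 2 := by
          rw [hMq]
          have hr : 2 * alpha * (alpha ^ ((1:ℝ) - q) / 2 * M ^ ((2:ℝ) - q))
              * (alpha ^ q * M ^ q)
              = alpha * ((alpha ^ ((1:ℝ) - q) * alpha ^ q)
                * (M ^ ((2:ℝ) - q) * M ^ q)) := by ring
          rw [hr, ha, hm]; ring
      _ = (alpha * g i₀) ^ 2 := h1.symm
  exact absurd hle (not_le.mpr hlt)
end

section
/- Descent of the proximal step for strongly smooth f: suppose f is σ₀-strongly smooth, i.e., f(x) ≤ f(w) + ⟨∇f(w), x-w⟩ + (σ₀/2)‖x-w‖² for all x,w. Let 0 < α ≤ 1/(σ + σ₀) with σ > 0, and let w minimize (1/2)‖w - (x - α∇f(x))‖² + αλ‖w‖_q^q. Then F(w) ≤ F(x) - (σ/2)‖w - x‖², where F = f + λ‖·‖_q^q. -/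
open scoped BigOperators RealInnerProductSpace

theorem stmt_13 {n : ℕ} (f : EuclideanSpace ℝ (Fin n) → ℝ) (hf : ContDiff ℝ 1 f)
    (lam q sigma sigma0 alpha : ℝ) (hlam : 0 < lam) (hq0 : 0 ≤ q) (hq1 : q < 1)
    (hsigma : 0 < sigma)
    (hsmooth : ∀ x w : EuclideanSpace ℝ (Fin n),
      f x ≤ f w + ⟪gradient f w, x - w⟫ + sigma0 / 2 * ‖x - w‖ ^ 2)
    (halpha0 : 0 < alpha) (halpha1 : alpha ≤ 1 / (sigma + sigma0))
    (x w : EuclideanSpace ℝ (Fin n))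
    (hmin : ∀ u : EuclideanSpace ℝ (Fin n),
      (1 / 2) * ‖w - (x - alpha • gradient f x)‖ ^ 2 + alpha * lam * normQq q w ≤
      (1 / 2) * ‖u - (x - alpha • gradient f x)‖ ^ 2 + alpha * lam * normQq q u) :
    f w + lam * normQq q w ≤ f x + lam * normQq q x - sigma / 2 * ‖w - x‖ ^ 2 := by
  set g := gradient f x with hg
  have h1 := hmin x
  have e1 : w - (x - alpha • g) = (w - x) + alpha • g := by abel
  have e2 : x - (x - alpha • g) = alpha • g := by abel
  rw [e1, e2, norm_add_sq_real] at h1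
  rw [real_inner_smul_right] at h1
  have hsm := hsmooth w x
  rw [real_inner_comm] at hsm
  have hss : 0 < sigma + sigma0 := by
    by_contra h
    push_neg at h
    have : 1 / (sigma + sigma0) ≤ 0 := div_nonpos_of_nonneg_of_nonpos (by norm_num) h
    linarith
  have hα : alpha * (sigma + sigma0) ≤ 1 := by
    rw [le_div_iff₀ hss] at halpha1
    linarith
  have hD : 0 ≤ ‖w - x‖ ^ 2 := sq_nonneg _
  -- from h1: alpha * ⟪w-x, g⟫ + 1/2 ‖w-x‖² ≤ alpha*lam*(N x - N w)
  have key : alpha * ⟪w - x, g⟫ + 1 / 2 * ‖w - x‖ ^ 2 ≤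
      alpha * lam * (normQq q x - normQq q w) := by nlinarith
  -- multiply smoothness by alpha and combine
  nlinarith [mul_le_mul_of_nonneg_left hsm halpha0.le,
    mul_le_mul_of_nonneg_right hα hD]
end

section
/- Support stabilization under a uniform magnitude lower bound: let (wᵏ) be a sequence in ℝⁿ with wᵏ⁺¹ - wᵏ → 0 and suppose there is c > 0 with |wᵢᵏ| ≥ c for every k and every i in supp(wᵏ). Then there exists k₀ such that supp(wᵏ) = supp(wᵏ⁺¹) for all k ≥ k₀. -/
lemma coord_le_norm' {n : ℕ} (x : EuclideanSpace ℝ (Fin n)) (i : Fin n) : |x i| ≤ ‖x‖ := by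
  rw [EuclideanSpace.norm_eq, ← Real.sqrt_sq_eq_abs]
  apply Real.sqrt_le_sqrt
  exact Finset.single_le_sum (fun j _ => sq_nonneg (x j)) (Finset.mem_univ i)
    |>.trans_eq (by simp [sq_abs])

theorem stmt_15 {n : ℕ} (w : ℕ → EuclideanSpace ℝ (Fin n))
    (hdiff : Filter.Tendsto (fun k => ‖w (k + 1) - w k‖) Filter.atTop (nhds 0))
    (c : ℝ) (hc : 0 < c) (hlb : ∀ k : ℕ, ∀ i : Fin n, w k i ≠ 0 → c ≤ |w k i|) :
    ∃ k₀ : ℕ, ∀ k ≥ k₀, {i : Fin n | w k i ≠ 0} = {i : Fin n | w (k + 1) i ≠ 0} := by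
  obtain ⟨k₀, hk₀⟩ := (Filter.tendsto_atTop'.mp hdiff) (Set.Iio c) (Iio_mem_nhds hc)
  refine ⟨k₀, fun k hk => ?_⟩
  have hnorm : ‖w (k + 1) - w k‖ < c := hk₀ k hk
  have key : ∀ i : Fin n, |w (k + 1) i - w k i| < c := fun i =>
    lt_of_le_of_lt (coord_le_norm' (w (k+1) - w k) i) hnorm
  ext i
  simp only [Set.mem_setOf_eq]
  constructor
  · intro h1 h2
    have h3 := hlb k i h1
    have h4 := key i
    rw [h2] at h4
    rw [abs_sub_comm] at h4
    simp only [sub_zero] at h4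
    linarith
  · intro h1 h2
    have h3 := hlb (k+1) i h1
    have h4 := key i
    rw [h2] at h4
    simp only [sub_zero] at h4
    linarith
end

section
/- Second-order sufficient condition from the eigenvalue gap for q ∈ (0,1): let x* ∈ ℝⁿ with S* = supp(x*) and suppose |xᵢ*| ≥ (2αλ(1-q))^{1/(2-q)} for all i ∈ S*, where α, λ > 0, q ∈ (0,1). If H ∈ ℝ^{|S*|×|S*|} is symmetric with λ_min(H) > q/(2α), then the matrix M = H + λ∇²(‖·‖_q^q)(x*_{S*}) is positive definite, where ∇²(‖·‖_q^q)(x*_{S*}) is the diagonal matrix with i-th diagonal entry q(q-1)|xᵢ*|^{q-2}. -/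
open Matrix

lemma aux_posDef_conj_unitary {m : Type*} [Fintype m] [DecidableEq m] {D : Matrix m m ℝ}
    (hD : D.PosDef) (U : Matrix.unitaryGroup m ℝ) :
    ((U : Matrix m m ℝ) * D * star (U : Matrix m m ℝ)).PosDef := by
  have hU : (U : Matrix m m ℝ) * star (U : Matrix m m ℝ) = 1 :=
    Matrix.mem_unitaryGroup_iff.mp U.2
  refine Matrix.posDef_iff_dotProduct_mulVec.mpr ⟨?_, fun x hx => ?_⟩
  · have := Matrix.isHermitian_conjTranspose_mul_mul (star (U : Matrix m m ℝ)) hD.1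
    simpa [Matrix.star_eq_conjTranspose] using this
  · have hx' : star (U : Matrix m m ℝ) *ᵥ x ≠ 0 := by
      intro h
      apply hx
      have := congrArg (fun v => (U : Matrix m m ℝ) *ᵥ v) h
      simpa [Matrix.mulVec_mulVec, hU] using this
    have e1 : ((U : Matrix m m ℝ) * D * star (U : Matrix m m ℝ)) *ᵥ x =
        (U : Matrix m m ℝ) *ᵥ (D *ᵥ (star (U : Matrix m m ℝ) *ᵥ x)) := by
      simp [Matrix.mulVec_mulVec, Matrix.mul_assoc]
    rw [e1, Matrix.dotProduct_mulVec]
    have e2 : star (star (U : Matrix m m ℝ) *ᵥ x) = star x ᵥ* (U : Matrix m m ℝ) := by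
      rw [Matrix.star_mulVec, Matrix.star_eq_conjTranspose, Matrix.conjTranspose_conjTranspose]
    have h3 := hD.dotProduct_mulVec_pos hx'
    rwa [e2] at h3

lemma aux_sub_smul_one_posDef {m : Type*} [Fintype m] [DecidableEq m] {A : Matrix m m ℝ}
    (hA : A.IsHermitian) {c : ℝ} (h : ∀ i, c < hA.eigenvalues i) :
    (A - c • (1 : Matrix m m ℝ)).PosDef := by
  have hd : (Matrix.diagonal (fun i => hA.eigenvalues i - c)).PosDef :=
    Matrix.posDef_diagonal_iff.mpr fun i => sub_pos.mpr (h i)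
  have key := aux_posDef_conj_unitary hd hA.eigenvectorUnitary
  have hU : (hA.eigenvectorUnitary : Matrix m m ℝ) * star (hA.eigenvectorUnitary : Matrix m m ℝ) = 1 :=
    Matrix.mem_unitaryGroup_iff.mp hA.eigenvectorUnitary.2
  have heq : (hA.eigenvectorUnitary : Matrix m m ℝ) * Matrix.diagonal (fun i => hA.eigenvalues i - c)
      * star (hA.eigenvectorUnitary : Matrix m m ℝ) = A - c • (1 : Matrix m m ℝ) := by
    have hsm : c • (1 : Matrix m m ℝ) = Matrix.diagonal (fun _ => c) := by
      ext i j
      by_cases h : i = j <;> simp [Matrix.one_apply, Matrix.diagonal_apply, h]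
    have hdiag : Matrix.diagonal (fun i => hA.eigenvalues i - c) =
        Matrix.diagonal (RCLike.ofReal ∘ hA.eigenvalues) - c • (1 : Matrix m m ℝ) := by
      rw [hsm, ← Matrix.diagonal_sub]
      congr 1
    rw [hdiag, Matrix.mul_sub, Matrix.sub_mul, Matrix.mul_smul, Matrix.smul_mul, Matrix.mul_one,
      hU]
    conv_rhs => rw [hA.spectral_theorem]
    rfl
  rwa [heq] at key

theorem stmt_18 {n : ℕ} (alpha lam q : ℝ) (halpha : 0 < alpha) (hlam : 0 < lam)
    (hq0 : 0 < q) (hq1 : q < 1) (xs : EuclideanSpace ℝ (Fin n))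
    (S : Finset (Fin n)) (hS : S.Nonempty) (hsupp : ∀ i, i ∈ S ↔ xs i ≠ 0)
    (hlb : ∀ i ∈ S, (2 * (alpha * lam) * (1 - q)) ^ ((1 : ℝ) / (2 - q)) ≤ |xs i|)
    (H : Matrix {i // i ∈ S} {i // i ∈ S} ℝ) (hH : H.IsHermitian)
    (heig : ∀ i, q / (2 * alpha) < hH.eigenvalues i) :
    (H + lam • Matrix.diagonal (fun i : {i // i ∈ S} =>
      q * (q - 1) * |xs (i : Fin n)| ^ (q - 2))).PosDef := by
  classical
  set c : ℝ := q / (2 * alpha) with hc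
  set f : {i // i ∈ S} → ℝ := fun i => q * (q - 1) * |xs (i : Fin n)| ^ (q - 2) with hf
  have hB : 0 < 2 * (alpha * lam) * (1 - q) := by
    have h1q : (0:ℝ) < 1 - q := by linarith
    have := mul_pos halpha hlam
    nlinarith
  have h2q : (0:ℝ) < 2 - q := by linarith
  -- key scalar bound
  have key : ∀ i : {i // i ∈ S}, 0 ≤ c + lam * f i := by
    intro i
    have hiS : (i : Fin n) ∈ S := i.2
    have hb := hlb i hiS
    have hbpos : (0:ℝ) < (2 * (alpha * lam) * (1 - q)) ^ ((1 : ℝ) / (2 - q)) :=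
      Real.rpow_pos_of_pos hB _
    have ht : |xs (i : Fin n)| ^ (q - 2) ≤
        ((2 * (alpha * lam) * (1 - q)) ^ ((1 : ℝ) / (2 - q))) ^ (q - 2) :=
      Real.rpow_le_rpow_of_nonpos hbpos hb (by linarith)
    have heq : ((2 * (alpha * lam) * (1 - q)) ^ ((1 : ℝ) / (2 - q))) ^ (q - 2) =
        (2 * (alpha * lam) * (1 - q))⁻¹ := by
      rw [← Real.rpow_mul hB.le]
      have : (1 : ℝ) / (2 - q) * (q - 2) = -1 := by
        field_simp
        ring
      rw [this, Real.rpow_neg_one]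
    rw [heq] at ht
    have hcoef : 0 < lam * (q * (1 - q)) := by
      have h1q : (0:ℝ) < 1 - q := by linarith
      exact mul_pos hlam (mul_pos hq0 h1q)
    have hmul : lam * (q * (1 - q)) * |xs (i : Fin n)| ^ (q - 2) ≤
        lam * (q * (1 - q)) * (2 * (alpha * lam) * (1 - q))⁻¹ :=
      mul_le_mul_of_nonneg_left ht hcoef.le
    have hval : lam * (q * (1 - q)) * (2 * (alpha * lam) * (1 - q))⁻¹ = c := by
      rw [hc]
      have h1q : (1:ℝ) - q ≠ 0 := (by linarith : (0:ℝ) < 1 - q).ne'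
      field_simp
    rw [hval] at hmul
    have : lam * f i = -(lam * (q * (1 - q)) * |xs (i : Fin n)| ^ (q - 2)) := by
      rw [hf]; ring
    rw [this]
    linarith
  have h1 : (H - c • (1 : Matrix {i // i ∈ S} {i // i ∈ S} ℝ)).PosDef :=
    aux_sub_smul_one_posDef hH heig
  have h2 : (c • (1 : Matrix {i // i ∈ S} {i // i ∈ S} ℝ) + lam • Matrix.diagonal f).PosSemidef := by
    have hsm : c • (1 : Matrix {i // i ∈ S} {i // i ∈ S} ℝ) = Matrix.diagonal (fun _ => c) := by
      ext i j
      by_cases h : i = j <;> simp [Matrix.one_apply, Matrix.diagonal_apply, h]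
    have hsm2 : lam • Matrix.diagonal f = Matrix.diagonal (fun i => lam * f i) := by
      ext i j
      by_cases h : i = j <;> simp [Matrix.diagonal_apply, h]
    have hdiag : c • (1 : Matrix {i // i ∈ S} {i // i ∈ S} ℝ) + lam • Matrix.diagonal f =
        Matrix.diagonal (fun i => c + lam * f i) := by
      rw [hsm, hsm2, ← Matrix.diagonal_add]
    rw [hdiag]
    exact Matrix.posSemidef_diagonal_iff.mpr key
  have hsplit : H + lam • Matrix.diagonal f =
      (H - c • (1 : Matrix {i // i ∈ S} {i // i ∈ S} ℝ)) +
      (c • (1 : Matrix {i // i ∈ S} {i // i ∈ S} ℝ) + lam • Matrix.diagonal f) := by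
    abel
  rw [hsplit]
  exact h1.add_posSemidef h2
end
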